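/- arXiv:2107.06817 — 2 statements merged into one kernel-verified Lean document; each statement's English description precedes it below -/
import Mathlib

section
/- For every pair of indices i, j, the dot product τ_{i,j} · L_V equals (w_max·cos(a_i, v_j) + w_avg·avg(ps)) / (w_max + w_avg), where cos(a_i,v_j) = (a_i·v_j)/(‖a_i‖‖v_j‖) and avg(ps) is the average of all N² pairwise cosine similarities between A and V. -/
open scoped BigOperators

noncomputable def cosSim {D : ℕ} (a b : EuclideanSpace ℝ (Fin D)) : ℝ :=
  (inner ℝ a b : ℝ) / (‖a‖ * ‖b‖)

noncomputable def avgSim {D m n : ℕ} (A : Fin m → EuclideanSpace ℝ (Fin D))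
    (V : Fin n → EuclideanSpace ℝ (Fin D)) : ℝ :=
  (∑ i, ∑ j, cosSim (A i) (V j)) / ((m : ℝ) * (n : ℝ))

noncomputable def maxSim {D m n : ℕ} (A : Fin m → EuclideanSpace ℝ (Fin D))
    (V : Fin n → EuclideanSpace ℝ (Fin D)) : ℝ :=
  ⨆ p : Fin m × Fin n, cosSim (A p.1) (V p.2)

noncomputable def simSet {D m n : ℕ} (wmax wavg : ℝ) (A : Fin m → EuclideanSpace ℝ (Fin D))
    (V : Fin n → EuclideanSpace ℝ (Fin D)) : ℝ :=
  (wmax * maxSim A V + wavg * avgSim A V) / (wmax + wavg)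

noncomputable def fpair {D m n : ℕ} (wmax wavg : ℝ) (A : Fin m → EuclideanSpace ℝ (Fin D))
    (V : Fin n → EuclideanSpace ℝ (Fin D)) (i : Fin m) (j : Fin n) : ℝ :=
  (wmax * cosSim (A i) (V j) + wavg * avgSim A V) / (wmax + wavg)

/-! Summing over the coordinates `d` first, the block of `τ_{i,j} · L_V` indexed by `(i', j')`
is the cosine similarity of `a_{i'}` and `v_{j'}` with weight `w_max·[i' = i ∧ j' = j] + w_avg/N²`;
summing these weighted similarities gives the claim. -/

open Finset

lemma cosSim_eq_sum_mul {D : ℕ} (a b : EuclideanSpace ℝ (Fin D)) :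
    cosSim a b = ∑ d, (‖a‖⁻¹ * a d) * (‖b‖⁻¹ * b d) := by
  simp only [cosSim, PiLp.inner_apply, RCLike.inner_apply, conj_trivial, sum_div]
  exact sum_congr rfl fun d _ => by rw [div_eq_mul_inv, mul_inv]; ring

lemma sum_sum_ite_and_mul {R ι κ : Type*} [CommSemiring R] [Fintype ι] [Fintype κ]
    [DecidableEq ι] [DecidableEq κ] (c c' : R) (f : ι → κ → R) (i : ι) (j : κ) :
    ∑ j', ∑ i', (c * (if j' = j ∧ i' = i then (1 : R) else 0) + c') * f i' j' =
      c * f i j + c' * ∑ i', ∑ j', f i' j' := by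
  simp only [add_mul, sum_add_distrib, ← mul_sum]
  rw [sum_comm (f := fun j' i' => f i' j')]
  simp [ite_and]

theorem stmt2_general (D N : ℕ) (wmax wavg : ℝ)
    (A V : Fin N → EuclideanSpace ℝ (Fin D))
    (i j : Fin N) :
    (∑ j' : Fin N, ∑ i' : Fin N, ∑ d : Fin D,
        ((wmax * ((if j' = j ∧ i' = i then (1 : ℝ) else 0) * (‖A i'‖⁻¹ * A i' d))
            + (wavg / ((N : ℝ) * (N : ℝ))) * (‖A i'‖⁻¹ * A i' d)) / (wmax + wavg))
          * (‖V j'‖⁻¹ * V j' d))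
      = (wmax * cosSim (A i) (V j) + wavg * avgSim A V) / (wmax + wavg) := by
  set c := wavg / ((N : ℝ) * (N : ℝ))
  calc _ = (∑ j', ∑ i', (wmax * (if j' = j ∧ i' = i then (1 : ℝ) else 0) + c) *
          cosSim (A i') (V j')) / (wmax + wavg) := by
        simp only [cosSim_eq_sum_mul, sum_div, mul_sum]
        exact sum_congr rfl fun _ _ => sum_congr rfl fun _ _ => sum_congr rfl fun _ _ => by ring
    _ = _ := by
        rw [sum_sum_ite_and_mul, avgSim]
        ring

theorem stmt2 (D N : ℕ) (hN : 0 < N) (wmax wavg : ℝ) (hw1 : 0 < wmax) (hw2 : 0 < wavg)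
    (A V : Fin N → EuclideanSpace ℝ (Fin D))
    (hA : ∀ i, A i ≠ 0) (hV : ∀ j, V j ≠ 0) (i j : Fin N) :
    (∑ j' : Fin N, ∑ i' : Fin N, ∑ d : Fin D,
        ((wmax * ((if j' = j ∧ i' = i then (1 : ℝ) else 0) * (‖A i'‖⁻¹ * A i' d))
            + (wavg / ((N : ℝ) * (N : ℝ))) * (‖A i'‖⁻¹ * A i' d)) / (wmax + wavg))
          * (‖V j'‖⁻¹ * V j' d))
      = (wmax * cosSim (A i) (V j) + wavg * avgSim A V) / (wmax + wavg) :=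
  stmt2_general D N wmax wavg A V i j
end

section
/- The search method is correct: max over candidates V of sim(A, V) equals max over pairs (i,j) of (τ_{i,j} dotted with its best candidate long vector), and any candidate achieving this double maximum is an optimal candidate (i.e., maximizes sim(A, ·)). -/
open scoped BigOperators

/-!
The max term of `simSet A V` is the largest pairwise cosine, so `simSet A V` is the largest of
the values `fpair A V i j`. Hence maximizing `simSet` over `C` amounts to maximizing `fpair` over
`C` for each pair `(i, j)` separately and then taking the best pair; the best candidate found this
way attains the bound, because `fpair A V i j ≤ simSet A V` always.
-/

section

variable {D m n : ℕ} (A : Fin m → EuclideanSpace ℝ (Fin D)) (V : Fin n → EuclideanSpace ℝ (Fin D))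

lemma cosSim_le_maxSim (i : Fin m) (j : Fin n) : cosSim (A i) (V j) ≤ maxSim A V :=
  le_ciSup (f := fun p : Fin m × Fin n => cosSim (A p.1) (V p.2)) (Finite.bddAbove_range _) (i, j)

lemma exists_cosSim_eq_maxSim [NeZero m] [NeZero n] :
    ∃ i j, cosSim (A i) (V j) = maxSim A V := by
  obtain ⟨p, hp⟩ := exists_eq_ciSup_of_finite (f := fun p : Fin m × Fin n => cosSim (A p.1) (V p.2))
  exact ⟨p.1, p.2, hp⟩

lemma fpair_le_simSet {wmax wavg : ℝ} (hwmax : 0 ≤ wmax) (hw : 0 ≤ wmax + wavg)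
    (i : Fin m) (j : Fin n) : fpair wmax wavg A V i j ≤ simSet wmax wavg A V := by
  unfold fpair simSet
  gcongr
  exact cosSim_le_maxSim A V i j

lemma exists_fpair_eq_simSet [NeZero m] [NeZero n] (wmax wavg : ℝ) :
    ∃ i j, fpair wmax wavg A V i j = simSet wmax wavg A V := by
  obtain ⟨i, j, hij⟩ := exists_cosSim_eq_maxSim A V
  exact ⟨i, j, by rw [fpair, simSet, hij]⟩

end

theorem stmt6_general (D N : ℕ) (hN : 0 < N) (wmax wavg : ℝ) (hw1 : 0 < wmax) (hw2 : 0 < wavg)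
    (A : Fin N → EuclideanSpace ℝ (Fin D))
    (C : Finset (Fin N → EuclideanSpace ℝ (Fin D))) (hC : C.Nonempty)
    (Vsel : Fin N → Fin N → (Fin N → EuclideanSpace ℝ (Fin D)))
    (hVselMem : ∀ i j, Vsel i j ∈ C)
    (hVselMax : ∀ i j, ∀ V ∈ C, fpair wmax wavg A V i j ≤ fpair wmax wavg A (Vsel i j) i j) :
    ∀ iopt jopt : Fin N,
      (∀ i j, fpair wmax wavg A (Vsel i j) i j ≤ fpair wmax wavg A (Vsel iopt jopt) iopt jopt) →
      (C.sup' hC (fun V => simSet wmax wavg A V) = fpair wmax wavg A (Vsel iopt jopt) iopt jopt ∧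
       ∀ W ∈ C, simSet wmax wavg A W ≤ simSet wmax wavg A (Vsel iopt jopt)) := by
  intro iopt jopt hopt
  have : NeZero N := ⟨hN.ne'⟩
  have hbound : ∀ W ∈ C,
      simSet wmax wavg A W ≤ fpair wmax wavg A (Vsel iopt jopt) iopt jopt := by
    intro W hW
    obtain ⟨i, j, hij⟩ := exists_fpair_eq_simSet A W wmax wavg
    exact hij ▸ (hVselMax i j W hW).trans (hopt i j)
  have hattained : fpair wmax wavg A (Vsel iopt jopt) iopt jopt ≤
      simSet wmax wavg A (Vsel iopt jopt) :=
    fpair_le_simSet A _ hw1.le (by linarith) iopt jopt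
  refine ⟨le_antisymm (C.sup'_le hC _ hbound) ?_, fun W hW => (hbound W hW).trans hattained⟩
  exact hattained.trans (C.le_sup' _ (hVselMem iopt jopt))

theorem stmt6 (D N : ℕ) (hN : 0 < N) (wmax wavg : ℝ) (hw1 : 0 < wmax) (hw2 : 0 < wavg)
    (A : Fin N → EuclideanSpace ℝ (Fin D)) (hA : ∀ i, A i ≠ 0)
    (C : Finset (Fin N → EuclideanSpace ℝ (Fin D))) (hC : C.Nonempty)
    (hCz : ∀ V ∈ C, ∀ j, V j ≠ 0)
    (Vsel : Fin N → Fin N → (Fin N → EuclideanSpace ℝ (Fin D)))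
    (hVselMem : ∀ i j, Vsel i j ∈ C)
    (hVselMax : ∀ i j, ∀ V ∈ C, fpair wmax wavg A V i j ≤ fpair wmax wavg A (Vsel i j) i j) :
    ∀ iopt jopt : Fin N,
      (∀ i j, fpair wmax wavg A (Vsel i j) i j ≤ fpair wmax wavg A (Vsel iopt jopt) iopt jopt) →
      (C.sup' hC (fun V => simSet wmax wavg A V) = fpair wmax wavg A (Vsel iopt jopt) iopt jopt ∧
       ∀ W ∈ C, simSet wmax wavg A W ≤ simSet wmax wavg A (Vsel iopt jopt)) :=
  stmt6_general D N hN wmax wavg hw1 hw2 A C hC Vsel hVselMem hVselMax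
end
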